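/- Let n, m ≥ 1, d ≥ 1, c ≥ 0, b ≥ 0, and let x_1, …, x_m ∈ ℝⁿ. Let N^{d,n}_{c,b} denote the class of functions f : ℝⁿ → ℝ of the form f(x) = ⟨w, h_{d−1}(x)⟩ + β, where h_0(x) = x, h_l(x) = ReLU(W_l h_{l−1}(x) + B_l) for l = 1, …, d−1, the W_l are real n×n matrices with ‖W_l‖_{2,∞} ≤ c, w ∈ ℝⁿ with ‖w‖₂ ≤ c, B_l ∈ ℝⁿ with ‖B_l‖_∞ ≤ b, and β ∈ ℝ with |β| ≤ b. Then the empirical Rademacher complexity of N^{d,n}_{c,b} on x_1, …, x_m satisfies R(N^{d,n}_{c,b}) ≤ (2c√n)^{d−1} · c · √(2/m) · max_{1≤i≤m} ‖x_i‖₂ + b · Σ_{j=0}^{d−1} (2c√n)^j. -/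

import Mathlib

/-- Entrywise ReLU on vectors. -/
noncomputable def relu {p : ℕ} (v : Fin p → ℝ) : Fin p → ℝ := fun i => max (v i) 0

/-- The hidden layers of a fully connected ReLU network:
`netHidden W B 0 x = x` and `netHidden W B l x = ReLU(W l (netHidden W B (l-1) x) + B l)`. -/
noncomputable def netHidden {n : ℕ} (W : ℕ → Matrix (Fin n) (Fin n) ℝ) (B : ℕ → Fin n → ℝ) :
    ℕ → (Fin n → ℝ) → Fin n → ℝ
  | 0 => fun x => x
  | l + 1 => fun x => relu ((W (l + 1)).mulVec (netHidden W B l x) + B (l + 1))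

/-- The class `N^{e,n}_{c,b}` of depth-`e` width-`n` ReLU networks `ℝⁿ → ℝ` whose weight
matrices have `L_{2,∞}` norm at most `c` (output weight vector of `ℓ₂` norm at most `c`) and
whose biases are bounded by `b` in `ℓ∞` norm. -/
noncomputable def NNclass (n e : ℕ) (c b : ℝ) : Set ((Fin n → ℝ) → ℝ) :=
  { f | ∃ (W : ℕ → Matrix (Fin n) (Fin n) ℝ) (B : ℕ → Fin n → ℝ) (w : Fin n → ℝ) (β : ℝ),
      (∀ l i, Real.sqrt (∑ j, W l i j ^ 2) ≤ c) ∧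
      (∀ l i, |B l i| ≤ b) ∧
      Real.sqrt (∑ j, w j ^ 2) ≤ c ∧ |β| ≤ b ∧
      ∀ x, f x = (∑ j, w j * netHidden W B (e - 1) x j) + β }

/-- The empirical Rademacher complexity of a class `K` of functions `ℝⁿ → ℝ` on the points
`x 1, …, x m`: the average over all sign vectors `s ∈ {−1,1}^m` of
`sup_{f ∈ K} (1/m) Σ_i s_i f(x_i)`. -/
noncomputable def rademacher {n m : ℕ} (x : Fin m → Fin n → ℝ)
    (K : Set ((Fin n → ℝ) → ℝ)) : ℝ :=
  (1 / 2 ^ m : ℝ) * ∑ s : Fin m → Bool,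
    ⨆ f : K, (1 / m : ℝ) * ∑ i, (if s i then (1 : ℝ) else -1) * (f : (Fin n → ℝ) → ℝ) (x i)

/-!
Layer peeling. A network of depth `e + 2` has the form `x ↦ ⟨w, ReLU (g x)⟩ + β` in which every
coordinate `g j` (a pre-activation of the last hidden layer) is itself a network of depth `e + 1`.
For a fixed sign vector `s`, Cauchy–Schwarz bounds `∑ᵢ sᵢ f(xᵢ)` by
`c √n maxⱼ |∑ᵢ sᵢ ReLU(g j xᵢ)| + b m`. Averaging over `s`, the absolute value costs a factor `2`
(the class contains `0` and `s ↦ -s` preserves the uniform measure), and the `1`-Lipschitz ReLU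
is removed by the Ledoux–Talagrand contraction inequality, proved by pairing sign vectors that
differ in one coordinate. This gives `R(N^{e+2}) ≤ 2c√n R(N^{e+1}) + b`. At depth one,
Cauchy–Schwarz over the sign vectors and `E ‖∑ᵢ sᵢ xᵢ‖² = ∑ᵢ ‖xᵢ‖²` give
`R(N¹) ≤ c √(∑ᵢ ‖xᵢ‖²) / m + b ≤ c √(2/m) maxᵢ ‖xᵢ‖ + b`; unrolling the recursion yields
the geometric sum.
-/

open Finset

lemma sqrt_sum_sq_le_sqrt_card_mul {κ : Type*} [Fintype κ] {u : κ → ℝ} {M : ℝ} (hM : 0 ≤ M)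
    (hu : ∀ k, |u k| ≤ M) : √(∑ k, u k ^ 2) ≤ √(Fintype.card κ) * M :=
  calc √(∑ k, u k ^ 2) ≤ √(∑ _k : κ, M ^ 2) :=
        Real.sqrt_le_sqrt <| sum_le_sum fun k _ => sq_le_sq.2 <| (hu k).trans (le_abs_self M)
    _ = √(Fintype.card κ) * M := by
        rw [sum_const, card_univ, nsmul_eq_mul, Real.sqrt_mul (Nat.cast_nonneg _), Real.sqrt_sq hM]

lemma abs_le_sqrt_sum_sq {κ : Type*} [Fintype κ] (v : κ → ℝ) (k : κ) : |v k| ≤ √(∑ j, v j ^ 2) :=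
  Real.abs_le_sqrt <| single_le_sum (fun j _ => sq_nonneg (v j)) (mem_univ k)

lemma abs_max_zero_le (z : ℝ) : |max z 0| ≤ |z| := by
  simpa using abs_max_sub_max_le_abs z 0 0

lemma abs_sum_mul_add_le {n : ℕ} {u h : Fin n → ℝ} {β c D b : ℝ} (hu : ∀ k, |u k| ≤ c)
    (hh : ∀ k, |h k| ≤ D) (hβ : |β| ≤ b) : |∑ k, u k * h k + β| ≤ n * (c * D) + b :=
  calc |∑ k, u k * h k + β| ≤ ∑ k, |u k * h k| + |β| :=
        (abs_add_le _ _).trans (add_le_add_left (abs_sum_le_sum_abs _ _) _)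
    _ ≤ ∑ _k : Fin n, c * D + b := by
        gcongr with k
        rw [abs_mul]
        exact mul_le_mul (hu k) (hh k) (abs_nonneg _) ((abs_nonneg _).trans (hu k))
    _ = n * (c * D) + b := by simp

lemma le_pow_mul_add_mul_geom_sum {r : ℕ → ℝ} {q b : ℝ} (hq : 0 ≤ q)
    (h : ∀ k, r (k + 1) ≤ q * r k + b) (k : ℕ) :
    r k ≤ q ^ k * r 0 + b * ∑ j ∈ range k, q ^ j := by
  induction k with
  | zero => simp
  | succ k ih =>
    calc r (k + 1) ≤ q * r k + b := h k
      _ ≤ q * (q ^ k * r 0 + b * ∑ j ∈ range k, q ^ j) + b := by gcongr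
      _ = q ^ (k + 1) * r 0 + b * ∑ j ∈ range (k + 1), q ^ j := by rw [geom_sum_succ]; ring

def boolSign (b : Bool) : ℝ := if b then 1 else -1

@[simp] lemma boolSign_not (b : Bool) : boolSign (!b) = -boolSign b := by
  cases b <;> simp [boolSign]

@[simp] lemma abs_boolSign (b : Bool) : |boolSign b| = 1 := by
  cases b <;> simp [boolSign]

lemma boolSign_mul_self (b : Bool) : boolSign b * boolSign b = 1 := by
  cases b <;> simp [boolSign]

section SignVectors

variable {m : ℕ}

def signedSum (s : Fin m → Bool) (v : Fin m → ℝ) : ℝ := ∑ i, boolSign (s i) * v i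

lemma abs_signedSum_le {s : Fin m → Bool} {v : Fin m → ℝ} {C : ℝ} (hv : ∀ i, |v i| ≤ C) :
    |signedSum s v| ≤ m * C :=
  calc |signedSum s v| ≤ ∑ i, |boolSign (s i) * v i| := abs_sum_le_sum_abs _ _
    _ ≤ ∑ _i : Fin m, C := sum_le_sum fun i _ => by rw [abs_mul, abs_boolSign, one_mul]; exact hv i
    _ = m * C := by simp

lemma signedSum_not (s : Fin m → Bool) (v : Fin m → ℝ) :
    signedSum (fun i => !s i) v = -signedSum s v := by
  simp [signedSum, sum_neg_distrib]

lemma signedSum_update (s : Fin m → Bool) (v : Fin m → ℝ) (i₀ : Fin m) (y : ℝ) :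
    signedSum s (Function.update v i₀ y) =
      signedSum s (Function.update v i₀ 0) + boolSign (s i₀) * y := by
  simp only [signedSum, ← add_sum_erase _ _ (mem_univ i₀), Function.update_self, mul_zero,
    zero_add]
  rw [add_comm]
  congr 1
  refine sum_congr rfl fun i hi => ?_
  rw [Function.update_of_ne (ne_of_mem_erase hi), Function.update_of_ne (ne_of_mem_erase hi)]

lemma signedSum_update_of_eq_zero {v : Fin m → ℝ} {i₀ : Fin m} (hv : v i₀ = 0) (s : Fin m → Bool)
    (σ : Bool) : signedSum (Function.update s i₀ σ) v = signedSum s v := by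
  refine sum_congr rfl fun i _ => ?_
  rcases eq_or_ne i i₀ with rfl | hi
  · simp [hv]
  · rw [Function.update_of_ne hi]

lemma sum_signs_comp_not (F : (Fin m → Bool) → ℝ) :
    ∑ s : Fin m → Bool, F (fun i => !s i) = ∑ s, F s :=
  Function.Involutive.bijective (f := fun s i => !s i) (fun s => by simp) |>.sum_comp F

lemma involutive_update_not (i₀ : Fin m) :
    Function.Involutive fun s : Fin m → Bool => Function.update s i₀ (!s i₀) := by
  intro s
  ext i
  rcases eq_or_ne i i₀ with rfl | hi <;> simp [*]

lemma sum_signs_comp_flip (i₀ : Fin m) (F : (Fin m → Bool) → ℝ) :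
    ∑ s, F (Function.update s i₀ (!s i₀)) = ∑ s, F s :=
  (involutive_update_not i₀).bijective.sum_comp F

lemma sum_signs_le_sum_of_add_flip_le {F G : (Fin m → Bool) → ℝ} (i₀ : Fin m)
    (h : ∀ s, F s + F (Function.update s i₀ (!s i₀)) ≤ G s + G (Function.update s i₀ (!s i₀))) :
    ∑ s, F s ≤ ∑ s, G s := by
  have := sum_le_sum fun s (_ : s ∈ univ) => h s
  rw [sum_add_distrib, sum_add_distrib, sum_signs_comp_flip i₀ F, sum_signs_comp_flip i₀ G] at this
  linarith

lemma sum_boolSign_mul_boolSign {i j : Fin m} (hij : i ≠ j) :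
    ∑ s : Fin m → Bool, boolSign (s i) * boolSign (s j) = 0 := by
  have h := sum_signs_comp_flip i fun s => boolSign (s i) * boolSign (s j)
  simp only [Function.update_self, Function.update_of_ne hij.symm, boolSign_not, neg_mul,
    sum_neg_distrib] at h
  linarith

lemma sum_signedSum_sq (v : Fin m → ℝ) :
    ∑ s : Fin m → Bool, signedSum s v ^ 2 = 2 ^ m * ∑ i, v i ^ 2 := by
  calc ∑ s : Fin m → Bool, signedSum s v ^ 2
      = ∑ i, ∑ j, v i * v j * ∑ s : Fin m → Bool, boolSign (s i) * boolSign (s j) := by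
        simp only [signedSum, sq, sum_mul_sum]
        rw [sum_comm]
        refine sum_congr rfl fun i _ => ?_
        rw [sum_comm]
        refine sum_congr rfl fun j _ => ?_
        rw [mul_sum]
        exact sum_congr rfl fun s _ => by ring
    _ = ∑ i, v i * v i * 2 ^ m := by
        refine sum_congr rfl fun i _ => ?_
        rw [sum_eq_single i (fun j _ hji => by rw [sum_boolSign_mul_boolSign hji.symm, mul_zero])
          (by simp)]
        simp [boolSign_mul_self]
    _ = 2 ^ m * ∑ i, v i ^ 2 := by rw [mul_sum]; exact sum_congr rfl fun i _ => by ring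

lemma signedSum_readout_le {κ : Type*} [Fintype κ] (s : Fin m → Bool) (F : Fin m → κ → ℝ)
    {w : κ → ℝ} {β c b : ℝ} (hw : √(∑ j, w j ^ 2) ≤ c) (hβ : |β| ≤ b) :
    signedSum s (fun i => ∑ j, w j * F i j + β) ≤
      c * √(∑ j, signedSum s (fun i => F i j) ^ 2) + m * b := by
  have hlin : signedSum s (fun i => ∑ j, w j * F i j + β) =
      ∑ j, w j * signedSum s (fun i => F i j) + β * signedSum s 1 := by
    simp only [signedSum, mul_add, sum_add_distrib, mul_sum, Pi.one_apply, mul_one]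
    rw [sum_comm]
    congr 1
    · exact sum_congr rfl fun j _ => sum_congr rfl fun i _ => by ring
    · exact sum_congr rfl fun i _ => by ring
  have hcs := Real.sum_mul_le_sqrt_mul_sqrt univ w fun j => signedSum s fun i => F i j
  have hβm : β * signedSum s 1 ≤ m * b :=
    calc β * signedSum s 1 ≤ |β| * |signedSum s 1| := (le_abs_self _).trans (abs_mul _ _).le
      _ ≤ b * (m * 1) := mul_le_mul hβ (abs_signedSum_le (by simp)) (abs_nonneg _)
          ((abs_nonneg _).trans hβ)
      _ = m * b := by ring
  calc signedSum s (fun i => ∑ j, w j * F i j + β)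
      ≤ √(∑ j, w j ^ 2) * √(∑ j, signedSum s (fun i => F i j) ^ 2) + m * b := by
        rw [hlin]
        exact add_le_add hcs hβm
    _ ≤ c * √(∑ j, signedSum s (fun i => F i j) ^ 2) + m * b := by gcongr

lemma sum_sqrt_sum_sq_signedSum_le {κ : Type*} [Fintype κ] (x : Fin m → κ → ℝ) :
    ∑ s : Fin m → Bool, √(∑ j, signedSum s (fun i => x i j) ^ 2) ≤
      2 ^ m * √(∑ i, ∑ j, x i j ^ 2) := by
  have hsq : ∑ s : Fin m → Bool, ∑ j, signedSum s (fun i => x i j) ^ 2 =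
      2 ^ m * ∑ i, ∑ j, x i j ^ 2 := by
    rw [sum_comm, sum_comm (f := fun i j => x i j ^ 2), mul_sum]
    exact sum_congr rfl fun j _ => sum_signedSum_sq _
  calc ∑ s : Fin m → Bool, √(∑ j, signedSum s (fun i => x i j) ^ 2)
      = ∑ s : Fin m → Bool, √1 * √(∑ j, signedSum s (fun i => x i j) ^ 2) := by simp
    _ ≤ √(∑ _s : Fin m → Bool, 1) *
          √(∑ s : Fin m → Bool, ∑ j, signedSum s (fun i => x i j) ^ 2) :=
        Real.sum_sqrt_mul_sqrt_le _ (fun _ => zero_le_one) fun _ => by positivity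
    _ = 2 ^ m * √(∑ i, ∑ j, x i j ^ 2) := by
        rw [hsq, ← Real.sqrt_mul (by positivity), ← mul_assoc, Real.sqrt_mul (by positivity)]
        simp [← sq, Real.sqrt_sq]

end SignVectors

section RademacherSum

variable {ι : Type*} {m : ℕ}

noncomputable def rademacherSum (a : ι → Fin m → ℝ) : ℝ := ∑ s, ⨆ t, signedSum s (a t)

lemma bddAbove_range_signedSum {a : ι → Fin m → ℝ} {C : ℝ} (ha : ∀ t i, |a t i| ≤ C)
    (s : Fin m → Bool) : BddAbove (Set.range fun t => signedSum s (a t)) :=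
  ⟨m * C, Set.forall_mem_range.2 fun t => (le_abs_self _).trans (abs_signedSum_le (ha t))⟩

lemma bddAbove_range_abs_signedSum {a : ι → Fin m → ℝ} {C : ℝ} (ha : ∀ t i, |a t i| ≤ C)
    (s : Fin m → Bool) : BddAbove (Set.range fun t => |signedSum s (a t)|) :=
  ⟨m * C, Set.forall_mem_range.2 fun t => abs_signedSum_le (ha t)⟩

/-- Contraction for a single sign, `H` standing for the signed sum over the other coordinates. -/
lemma ciSup_add_ciSup_sub_le [Nonempty ι] {H ψ α : ι → ℝ}
    (hψ : ∀ t u, |ψ t - ψ u| ≤ |α t - α u|)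
    (h₁ : BddAbove (Set.range fun t => H t + α t)) (h₂ : BddAbove (Set.range fun t => H t - α t)) :
    (⨆ t, H t + ψ t) + (⨆ t, H t - ψ t) ≤ (⨆ t, H t + α t) + ⨆ t, H t - α t := by
  refine ciSup_add_ciSup_le fun t u => ?_
  have hψ' := (le_abs_self _).trans (hψ t u)
  rcases le_total (α u) (α t) with h | h
  · rw [abs_of_nonneg (sub_nonneg.2 h)] at hψ'
    linarith [le_ciSup h₁ t, le_ciSup h₂ u]
  · rw [abs_of_nonpos (sub_nonpos.2 h)] at hψ'
    linarith [le_ciSup h₁ u, le_ciSup h₂ t]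

lemma rademacherSum_update_le [Nonempty ι] {a : ι → Fin m → ℝ} {C : ℝ}
    (ha : ∀ t i, |a t i| ≤ C) {φ : ℝ → ℝ} (hφ : LipschitzWith 1 φ) (i₀ : Fin m) :
    rademacherSum (fun t => Function.update (a t) i₀ (φ (a t i₀))) ≤ rademacherSum a := by
  set H : (Fin m → Bool) → ι → ℝ := fun s t => signedSum s (Function.update (a t) i₀ 0)
  have hsplit : ∀ s t y, signedSum s (Function.update (a t) i₀ y) =
      H s t + boolSign (s i₀) * y := fun s t y => signedSum_update _ _ _ _
  have ha' : ∀ s t, signedSum s (a t) = H s t + boolSign (s i₀) * a t i₀ := fun s t => by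
    rw [← hsplit, Function.update_eq_self]
  have hflip : ∀ s t, H (Function.update s i₀ (!s i₀)) t = H s t :=
    fun s t => signedSum_update_of_eq_zero (by simp) _ _
  refine sum_signs_le_sum_of_add_flip_le i₀ fun s => ?_
  have hb₁ := bddAbove_range_signedSum ha s
  have hb₂ := bddAbove_range_signedSum ha (Function.update s i₀ (!s i₀))
  simp only [hsplit, ha', hflip, Function.update_self, boolSign_not, neg_mul,
    ← sub_eq_add_neg] at hb₁ hb₂ ⊢
  refine ciSup_add_ciSup_sub_le (fun t u => ?_) hb₁ hb₂
  rw [← mul_sub, ← mul_sub, abs_mul, abs_mul, abs_boolSign, one_mul, one_mul]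
  simpa [Real.dist_eq] using hφ.dist_le_mul (a t i₀) (a u i₀)

theorem rademacherSum_comp_le [Nonempty ι] {a : ι → Fin m → ℝ} {C : ℝ}
    (ha : ∀ t i, |a t i| ≤ C) {φ : ℝ → ℝ} (hφ : LipschitzWith 1 φ) :
    rademacherSum (fun t i => φ (a t i)) ≤ rademacherSum a := by
  classical
  have hφa : ∀ t i, |φ (a t i)| ≤ |φ 0| + C := fun t i => by
    have := hφ.dist_le_mul (a t i) 0
    simp only [Real.dist_eq, NNReal.coe_one, one_mul, sub_zero] at this
    linarith [abs_sub_abs_le_abs_sub (φ (a t i)) (φ 0), ha t i]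
  suffices h : ∀ I : Finset (Fin m),
      rademacherSum (fun t i => if i ∈ I then φ (a t i) else a t i) ≤ rademacherSum a by
    simpa using h univ
  intro I
  induction I using Finset.induction_on with
  | empty => simp
  | insert i₀ I hi₀ ih =>
    have hbd : ∀ t i, |if i ∈ I then φ (a t i) else a t i| ≤ |φ 0| + C := fun t i => by
      split_ifs
      · exact hφa t i
      · linarith [ha t i, abs_nonneg (φ 0)]
    refine le_trans (le_of_eq ?_) ((rademacherSum_update_le hbd hφ i₀).trans ih)
    congr 1
    funext t i
    rcases eq_or_ne i i₀ with rfl | hi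
    · simp [hi₀]
    · simp [hi]

theorem sum_iSup_abs_signedSum_le {a : ι → Fin m → ℝ} {C : ℝ} (ha : ∀ t i, |a t i| ≤ C)
    {t₀ : ι} (h₀ : a t₀ = 0) :
    ∑ s, ⨆ t, |signedSum s (a t)| ≤ 2 * rademacherSum a := by
  have : Nonempty ι := ⟨t₀⟩
  have hnonneg : ∀ s, 0 ≤ ⨆ t, signedSum s (a t) := fun s => by
    simpa [h₀, signedSum] using le_ciSup (bddAbove_range_signedSum ha s) t₀
  have hsplit : ∀ s, ⨆ t, |signedSum s (a t)| ≤
      (⨆ t, signedSum s (a t)) + ⨆ t, signedSum (fun i => !s i) (a t) := fun s =>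
    ciSup_le fun t => by
      have h₁ := le_ciSup (bddAbove_range_signedSum ha s) t
      have h₂ := le_ciSup (bddAbove_range_signedSum ha fun i => !s i) t
      have h₃ := signedSum_not s (a t)
      exact abs_le'.2 ⟨by linarith [hnonneg fun i => !s i], by linarith [hnonneg s]⟩
  calc ∑ s, ⨆ t, |signedSum s (a t)|
      ≤ ∑ s, ((⨆ t, signedSum s (a t)) + ⨆ t, signedSum (fun i => !s i) (a t)) :=
        sum_le_sum fun s _ => hsplit s
    _ = 2 * rademacherSum a := by
        rw [sum_add_distrib, sum_signs_comp_not fun s => ⨆ t, signedSum s (a t), rademacherSum]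
        ring

end RademacherSum

section Network

variable {n m : ℕ}

lemma netHidden_succ_apply (W : ℕ → Matrix (Fin n) (Fin n) ℝ) (B : ℕ → Fin n → ℝ) (l : ℕ)
    (x : Fin n → ℝ) (j : Fin n) :
    netHidden W B (l + 1) x j = max (∑ k, W (l + 1) j k * netHidden W B l x k + B (l + 1) j) 0 :=
  rfl

lemma exists_abs_netHidden_le (c b : ℝ) (x : Fin m → Fin n → ℝ) (l : ℕ) :
    ∃ D, ∀ W B, (∀ l i, √(∑ j, W l i j ^ 2) ≤ c) → (∀ l i, |B l i| ≤ b) →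
      ∀ i j, |netHidden W B l (x i) j| ≤ D := by
  induction l with
  | zero =>
    exact ⟨‖x‖, fun W B _ _ i j => (norm_le_pi_norm (x i) j).trans (norm_le_pi_norm x i)⟩
  | succ l ih =>
    obtain ⟨D, hD⟩ := ih
    refine ⟨n * (c * D) + b, fun W B hW hB i j => ?_⟩
    rw [netHidden_succ_apply]
    exact (abs_max_zero_le _).trans <| abs_sum_mul_add_le
      (fun k => (abs_le_sqrt_sum_sq _ k).trans (hW _ _)) (hD W B hW hB i) (hB _ _)

namespace NNclass

variable {c b : ℝ}

lemma zero_mem {e : ℕ} (hc : 0 ≤ c) (hb : 0 ≤ b) : (fun _ => 0) ∈ NNclass n e c b :=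
  ⟨0, 0, 0, 0, by simp [hc], by simp [hb], by simp [hc], by simp [hb], by simp⟩

lemma exists_forall_abs_le (e : ℕ) (x : Fin m → Fin n → ℝ) :
    ∃ C, ∀ f ∈ NNclass n e c b, ∀ i, |f (x i)| ≤ C := by
  obtain ⟨D, hD⟩ := exists_abs_netHidden_le c b x (e - 1)
  refine ⟨n * (c * D) + b, ?_⟩
  rintro f ⟨W, B, w, β, hW, hB, hw, hβ, hf⟩ i
  rw [hf]
  exact abs_sum_mul_add_le (fun k => (abs_le_sqrt_sum_sq w k).trans hw) (hD W B hW hB i) hβ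

lemma exists_relu_readout {e : ℕ} {f : (Fin n → ℝ) → ℝ} (hf : f ∈ NNclass n (e + 2) c b) :
    ∃ (g : Fin n → NNclass n (e + 1) c b) (w : Fin n → ℝ) (β : ℝ),
      √(∑ j, w j ^ 2) ≤ c ∧ |β| ≤ b ∧
        ∀ x, f x = ∑ j, w j * max ((g j : (Fin n → ℝ) → ℝ) x) 0 + β := by
  obtain ⟨W, B, w, β, hW, hB, hw, hβ, hf⟩ := hf
  exact ⟨fun j => ⟨fun x => ∑ k, W (e + 1) j k * netHidden W B e x k + B (e + 1) j,
    W, B, W (e + 1) j, B (e + 1) j, hW, hB, hW _ _, hB _ _, fun _ => rfl⟩, w, β, hw, hβ, hf⟩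

end NNclass

end Network

section Bounds

variable {n m : ℕ} {c b : ℝ} (x : Fin m → Fin n → ℝ)

def valuesOn (K : Set ((Fin n → ℝ) → ℝ)) : K → Fin m → ℝ := fun f i => f.1 (x i)

lemma rademacher_eq_rademacherSum (K : Set ((Fin n → ℝ) → ℝ)) :
    rademacher x K = rademacherSum (valuesOn x K) / (2 ^ m * m) := by
  simp only [rademacher, rademacherSum, signedSum, boolSign, valuesOn,
    ← Real.mul_iSup_of_nonneg (by positivity : (0 : ℝ) ≤ 1 / m), ← mul_sum]
  ring

lemma rademacher_le_of_rademacherSum_le {K : Set ((Fin n → ℝ) → ℝ)} {P : ℝ} (hb : 0 ≤ b)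
    (h : rademacherSum (valuesOn x K) ≤ P + 2 ^ m * (m * b)) :
    rademacher x K ≤ P / (2 ^ m * m) + b := by
  rw [rademacher_eq_rademacherSum]
  calc rademacherSum (valuesOn x K) / (2 ^ m * m) ≤ (P + 2 ^ m * (m * b)) / (2 ^ m * m) := by
        gcongr
    _ = P / (2 ^ m * m) + 2 ^ m * (m * b) / (2 ^ m * m) := add_div _ _ _
    _ ≤ P / (2 ^ m * m) + b := by
        gcongr
        exact div_le_of_le_mul₀ (by positivity) hb (le_of_eq (by ring))

lemma rademacherSum_NNclass_one_le (hc : 0 ≤ c) (hb : 0 ≤ b) :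
    rademacherSum (valuesOn x (NNclass n 1 c b)) ≤
      c * (2 ^ m * √(∑ i, ∑ j, x i j ^ 2)) + 2 ^ m * (m * b) := by
  have : Nonempty (NNclass n 1 c b) := ⟨⟨_, NNclass.zero_mem hc hb⟩⟩
  calc rademacherSum (valuesOn x (NNclass n 1 c b))
      ≤ ∑ s : Fin m → Bool, (c * √(∑ j, signedSum s (fun i => x i j) ^ 2) + m * b) :=
        sum_le_sum fun s _ => ciSup_le fun ⟨f, W, B, w, β, _, _, hw, hβ, hf⟩ => by
          have hfx : (fun i => f (x i)) = fun i => ∑ j, w j * x i j + β :=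
            funext fun i => hf (x i)
          change signedSum s (fun i => f (x i)) ≤ _
          rw [hfx]
          exact signedSum_readout_le s x hw hβ
    _ = c * ∑ s : Fin m → Bool, √(∑ j, signedSum s (fun i => x i j) ^ 2) + 2 ^ m * (m * b) := by
        simp [sum_add_distrib, mul_sum]
    _ ≤ c * (2 ^ m * √(∑ i, ∑ j, x i j ^ 2)) + 2 ^ m * (m * b) := by
        gcongr
        exact sum_sqrt_sum_sq_signedSum_le x

lemma rademacher_NNclass_one_le (hc : 0 ≤ c) (hb : 0 ≤ b) :
    rademacher x (NNclass n 1 c b) ≤ c * √(2 / m) * (⨆ i, √(∑ j, x i j ^ 2)) + b := by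
  set X := ⨆ i, √(∑ j, x i j ^ 2)
  have hX : √(∑ i, ∑ j, x i j ^ 2) ≤ √m * X := by
    have h := sqrt_sum_sq_le_sqrt_card_mul (u := fun i => √(∑ j, x i j ^ 2)) (M := X)
      (Real.iSup_nonneg fun _ => Real.sqrt_nonneg _) fun i => by
        rw [abs_of_nonneg (Real.sqrt_nonneg _)]
        exact le_ciSup (f := fun i => √(∑ j, x i j ^ 2)) (Set.finite_range _).bddAbove i
    simpa [Real.sq_sqrt (sum_nonneg fun _ _ => sq_nonneg _)] using h
  have hsqrt : √m / m ≤ √(2 / m) := by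
    rw [Real.sqrt_div_self', one_div, ← Real.sqrt_inv, inv_eq_one_div]
    gcongr
    norm_num
  refine (rademacher_le_of_rademacherSum_le x hb (rademacherSum_NNclass_one_le x hc hb)).trans ?_
  gcongr ?_ + b
  calc c * (2 ^ m * √(∑ i, ∑ j, x i j ^ 2)) / (2 ^ m * m) = c * (√(∑ i, ∑ j, x i j ^ 2) / m) := by
        rw [mul_div_assoc, mul_div_mul_left _ _ (by positivity)]
    _ ≤ c * (√m * X / m) := by gcongr
    _ = c * (√m / m) * X := by ring
    _ ≤ c * √(2 / m) * X := by gcongr; exact Real.iSup_nonneg fun _ => Real.sqrt_nonneg _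

lemma rademacherSum_NNclass_add_two_le (hc : 0 ≤ c) (hb : 0 ≤ b) (e : ℕ) :
    rademacherSum (valuesOn x (NNclass n (e + 2) c b)) ≤
      2 * c * √n * rademacherSum (valuesOn x (NNclass n (e + 1) c b)) + 2 ^ m * (m * b) := by
  have : Nonempty (NNclass n (e + 2) c b) := ⟨⟨_, NNclass.zero_mem hc hb⟩⟩
  have : Nonempty (NNclass n (e + 1) c b) := ⟨⟨_, NNclass.zero_mem hc hb⟩⟩
  set a := valuesOn x (NNclass n (e + 1) c b)
  obtain ⟨C, hC⟩ := NNclass.exists_forall_abs_le (c := c) (b := b) (e + 1) x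
  have ha : ∀ g i, |a g i| ≤ C := fun g i => hC g g.2 i
  have hrelu : ∀ g i, |max (a g i) 0| ≤ C := fun g i => (abs_max_zero_le _).trans (ha g i)
  set M : (Fin m → Bool) → ℝ := fun s => ⨆ g, |signedSum s (fun i => max (a g i) 0)|
  have per_sign : ∀ s, ⨆ f, signedSum s (valuesOn x (NNclass n (e + 2) c b) f) ≤
      c * (√n * M s) + m * b := fun s => ciSup_le fun f => by
    obtain ⟨g, w, β, hw, hβ, hf⟩ := NNclass.exists_relu_readout f.2
    change signedSum s (fun i => f.1 (x i)) ≤ _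
    simp only [hf]
    refine (signedSum_readout_le s (fun i j => max (a (g j) i) 0) hw hβ).trans ?_
    gcongr
    simpa using sqrt_sum_sq_le_sqrt_card_mul (Real.iSup_nonneg fun _ => abs_nonneg _)
      fun j => le_ciSup (bddAbove_range_abs_signedSum hrelu s) (g j)
  calc rademacherSum (valuesOn x (NNclass n (e + 2) c b))
      ≤ ∑ s : Fin m → Bool, (c * (√n * M s) + m * b) := sum_le_sum fun s _ => per_sign s
    _ = c * √n * ∑ s, M s + 2 ^ m * (m * b) := by simp [sum_add_distrib, mul_sum, mul_assoc]
    _ ≤ c * √n * (2 * rademacherSum fun g i => max (a g i) 0) + 2 ^ m * (m * b) := by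
        gcongr
        exact sum_iSup_abs_signedSum_le hrelu (t₀ := ⟨_, NNclass.zero_mem hc hb⟩)
          (by ext; simp [a, valuesOn])
    _ ≤ c * √n * (2 * rademacherSum a) + 2 ^ m * (m * b) := by
        gcongr
        exact rademacherSum_comp_le (φ := fun z => max z 0) ha (LipschitzWith.id.max_const 0)
    _ = 2 * c * √n * rademacherSum a + 2 ^ m * (m * b) := by ring

lemma rademacher_NNclass_add_two_le (hc : 0 ≤ c) (hb : 0 ≤ b) (e : ℕ) :
    rademacher x (NNclass n (e + 2) c b) ≤
      2 * c * √n * rademacher x (NNclass n (e + 1) c b) + b := by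
  refine (rademacher_le_of_rademacherSum_le x hb
    (rademacherSum_NNclass_add_two_le x hc hb e)).trans_eq ?_
  rw [rademacher_eq_rademacherSum, mul_div_assoc]

end Bounds

theorem rademacher_deep_relu_le_general (n m d : ℕ) (hd : 1 ≤ d)
    (c b : ℝ) (hc : 0 ≤ c) (hb : 0 ≤ b) (x : Fin m → Fin n → ℝ) :
    rademacher x (NNclass n d c b) ≤
      (2 * c * Real.sqrt n) ^ (d - 1) * c * Real.sqrt (2 / m) *
          (⨆ i : Fin m, Real.sqrt (∑ j, x i j ^ 2)) +
        b * ∑ j ∈ Finset.range d, (2 * c * Real.sqrt n) ^ j := by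
  obtain ⟨e, rfl⟩ : ∃ e, d = e + 1 := ⟨d - 1, by omega⟩
  set q := 2 * c * √n
  calc rademacher x (NNclass n (e + 1) c b)
      ≤ q ^ e * rademacher x (NNclass n 1 c b) + b * ∑ j ∈ range e, q ^ j :=
        le_pow_mul_add_mul_geom_sum (r := fun k => rademacher x (NNclass n (k + 1) c b))
          (by positivity) (rademacher_NNclass_add_two_le x hc hb) e
    _ ≤ q ^ e * (c * √(2 / m) * (⨆ i, √(∑ j, x i j ^ 2)) + b) + b * ∑ j ∈ range e, q ^ j := by
        gcongr
        exact rademacher_NNclass_one_le x hc hb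
    _ = q ^ (e + 1 - 1) * c * √(2 / m) * (⨆ i, √(∑ j, x i j ^ 2)) +
          b * ∑ j ∈ range (e + 1), q ^ j := by
        rw [Nat.add_sub_cancel, geom_sum_succ']
        ring

/-- Upper bound for the Rademacher complexity of depth-`d`, width-`n` ReLU
networks with `L_{2,∞}`-normalized weight matrices and bounded biases:
`R(N^{d,n}_{c,b}) ≤ (2c√n)^{d−1} c √(2/m) max_i ‖x_i‖₂ + b Σ_{j=0}^{d−1} (2c√n)^j`. -/
theorem rademacher_deep_relu_le (n m d : ℕ) (hn : 1 ≤ n) (hm : 1 ≤ m) (hd : 1 ≤ d)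
    (c b : ℝ) (hc : 0 ≤ c) (hb : 0 ≤ b) (x : Fin m → Fin n → ℝ) :
    rademacher x (NNclass n d c b) ≤
      (2 * c * Real.sqrt n) ^ (d - 1) * c * Real.sqrt (2 / m) *
          (⨆ i : Fin m, Real.sqrt (∑ j, x i j ^ 2)) +
        b * ∑ j ∈ Finset.range d, (2 * c * Real.sqrt n) ^ j :=
  rademacher_deep_relu_le_general n m d hd c b hc hb x
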